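/- Let $n\ge 1$, let $\alpha$ be the unique solution of $\tan(\alpha\ln(n+1))+2\alpha=0$ in the interval $(\pi/(2\ln(n+1)),\,\pi/\ln(n+1))$, let $h(x)=x^{-1/2}\big(2\alpha\cos(\alpha\ln x)+\sin(\alpha\ln x)\big)$ for $1\le x\le n+1$, and set $a_k=\int_k^{k+1} h(x)\,dx$ for $k=1,\dots,n$. Then $\sum_{k=1}^{n}\Big(\frac{1}{k}\sum_{j=1}^{k}a_j\Big)^2 \ge \frac{4}{1+4\alpha^2}\sum_{k=1}^{n}a_k^2$. -/

import Mathlib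

/-! With `t = α log x` and `c = (1 + 4α²)/4`, the function `H x = 2 √x sin t` solves the Euler
equation `x² H'' + c H = 0` of the continuous Hardy inequality on `[1, n + 1]`, and `h = H'`.
The root condition gives `h ≥ 0` on `[1, n + 1]` and `h (n + 1) = 0`.

Since `H 1 = 0`, the partial sums of `a` are `H (k + 1)`, and since `H` is nondecreasing,
`∑ (H (k + 1) / k)² ≥ ∫ (H x / x)²`. Cauchy–Schwarz on unit intervals gives `∑ a_k² ≤ ∫ h²`.
Finally the Euler equation gives `(H h)' = h² - c (H / x)²`, and `H h` vanishes at both ends,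
so `∫ h² = c ∫ (H / x)²`. -/

open Real MeasureTheory Finset

section UnitIntervals

variable {f : ℝ → ℝ} {n : ℕ}

theorem Icc_natCast_subset_Icc_one {k : ℕ} (hk : k ∈ Icc 1 n) :
    Set.Icc (k : ℝ) (k + 1) ⊆ Set.Icc 1 (n + 1) := by
  rw [Finset.mem_Icc] at hk
  exact Set.Icc_subset_Icc (by exact_mod_cast hk.1) (by exact_mod_cast Nat.succ_le_succ hk.2)

theorem IntervalIntegrable.of_mem_Icc_one (hf : IntervalIntegrable f volume 1 (n + 1)) {k : ℕ}
    (hk : k ∈ Icc 1 n) : IntervalIntegrable f volume k (k + 1) := by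
  refine hf.mono_set ?_
  rw [Set.uIcc_of_le (by linarith), Set.uIcc_of_le (by linarith [n.cast_nonneg (α := ℝ)])]
  exact Icc_natCast_subset_Icc_one hk

theorem sum_Icc_intervalIntegral_eq (hf : IntervalIntegrable f volume 1 (n + 1)) :
    ∑ k ∈ Icc 1 n, ∫ x in (k : ℝ)..(k + 1), f x = ∫ x in (1 : ℝ)..(n + 1), f x := by
  have := intervalIntegral.sum_integral_adjacent_intervals_Ico (a := Nat.cast) (μ := volume)
    (f := f) (m := 1) (n := n + 1) (by omega) fun k hk => by
      push_cast
      exact hf.of_mem_Icc_one (by simpa using hk)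
  rw [← Finset.Ico_add_one_right_eq_Icc]
  push_cast at this
  exact this

theorem sq_intervalIntegral_le_mul_intervalIntegral_sq {a b : ℝ} (hab : a ≤ b)
    (hf : IntervalIntegrable f volume a b)
    (hf2 : IntervalIntegrable (fun x => f x ^ 2) volume a b) :
    (∫ x in a..b, f x) ^ 2 ≤ (b - a) * ∫ x in a..b, f x ^ 2 := by
  set m := ∫ x in a..b, f x
  have hvar : 0 ≤ ∫ x in a..b, ((b - a) * f x - m) ^ 2 :=
    intervalIntegral.integral_nonneg hab fun x _ => sq_nonneg _
  have hexpand : ∫ x in a..b, ((b - a) * f x - m) ^ 2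
      = (b - a) * ((b - a) * ∫ x in a..b, f x ^ 2) - (b - a) * m ^ 2 := by
    have hsq : ∀ x, ((b - a) * f x - m) ^ 2
        = (b - a) ^ 2 * f x ^ 2 - 2 * (b - a) * m * f x + m ^ 2 := fun x => by ring
    simp_rw [hsq]
    rw [intervalIntegral.integral_add ((hf2.const_mul _).sub (hf.const_mul _))
        intervalIntegrable_const, intervalIntegral.integral_sub (hf2.const_mul _) (hf.const_mul _),
      intervalIntegral.integral_const_mul, intervalIntegral.integral_const_mul,
      intervalIntegral.integral_const, smul_eq_mul]
    ring
  rcases hab.lt_or_eq with hlt | rfl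
  · nlinarith
  · simp [m]

theorem sum_sq_intervalIntegral_le (hf : IntervalIntegrable f volume 1 (n + 1))
    (hf2 : IntervalIntegrable (fun x => f x ^ 2) volume 1 (n + 1)) :
    ∑ k ∈ Icc 1 n, (∫ x in (k : ℝ)..(k + 1), f x) ^ 2 ≤ ∫ x in (1 : ℝ)..(n + 1), f x ^ 2 := by
  rw [← sum_Icc_intervalIntegral_eq hf2]
  refine sum_le_sum fun k hk => ?_
  simpa using sq_intervalIntegral_le_mul_intervalIntegral_sq (by linarith)
    (hf.of_mem_Icc_one hk) (hf2.of_mem_Icc_one hk)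

theorem intervalIntegral_sq_div_le {F : ℝ → ℝ} {a b : ℝ} (ha : 0 < a) (hab : a ≤ b)
    (hF : MonotoneOn F (Set.Icc a b)) (hFa : 0 ≤ F a)
    (hint : IntervalIntegrable (fun x => (F x / x) ^ 2) volume a b) :
    ∫ x in a..b, (F x / x) ^ 2 ≤ (b - a) * (F b / a) ^ 2 := by
  have hbound : ∀ x ∈ Set.Icc a b, (F x / x) ^ 2 ≤ (F b / a) ^ 2 := fun x hx => by
    have hFx : F a ≤ F x := hF ⟨le_rfl, hab⟩ hx hx.1
    have hFb : F x ≤ F b := hF hx ⟨hab, le_rfl⟩ hx.2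
    exact pow_le_pow_left₀ (div_nonneg (hFa.trans hFx) (ha.le.trans hx.1))
      (div_le_div₀ (hFa.trans (hFx.trans hFb)) hFb ha hx.1) 2
  simpa using intervalIntegral.integral_mono_on hab hint intervalIntegrable_const hbound

theorem integral_sq_div_le_sum_sq_partialAvg {F : ℝ → ℝ}
    (hF : ∀ x ∈ Set.Icc (1 : ℝ) (n + 1), HasDerivAt F (f x) x)
    (hf : ContinuousOn f (Set.Icc 1 (n + 1))) (hf0 : ∀ x ∈ Set.Icc (1 : ℝ) (n + 1), 0 ≤ f x)
    (hF1 : F 1 = 0) :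
    ∫ x in (1 : ℝ)..(n + 1), (F x / x) ^ 2
      ≤ ∑ k ∈ Icc 1 n, ((1 / (k : ℝ)) * ∑ j ∈ Icc 1 k, ∫ x in (j : ℝ)..(j + 1), f x) ^ 2 := by
  have hFcont : ContinuousOn F (Set.Icc 1 (n + 1)) :=
    fun x hx => (hF x hx).continuousAt.continuousWithinAt
  have hmono : MonotoneOn F (Set.Icc 1 (n + 1)) :=
    monotoneOn_of_hasDerivWithinAt_nonneg (convex_Icc _ _) hFcont
      (fun x hx => (hF x (interior_subset hx)).hasDerivWithinAt)
      fun x hx => hf0 x (interior_subset hx)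
  have hpartial : ∀ k ∈ Icc 1 n, ∑ j ∈ Icc 1 k, ∫ x in (j : ℝ)..(j + 1), f x = F (k + 1) := by
    intro k hk
    have hkn : (k : ℝ) + 1 ≤ n + 1 := by
      exact_mod_cast Nat.succ_le_succ (Finset.mem_Icc.1 hk).2
    have hsub : Set.Icc (1 : ℝ) (k + 1) ⊆ Set.Icc 1 (n + 1) := Set.Icc_subset_Icc_right hkn
    have hk1 : (1 : ℝ) ≤ k + 1 := by linarith [k.cast_nonneg (α := ℝ)]
    rw [sum_Icc_intervalIntegral_eq ((hf.mono hsub).intervalIntegrable_of_Icc hk1),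
      intervalIntegral.integral_eq_sub_of_hasDerivAt
        (fun x hx => hF x (hsub (Set.uIcc_of_le hk1 ▸ hx)))
        ((hf.mono hsub).intervalIntegrable_of_Icc hk1), hF1, sub_zero]
  have hn1 : (1 : ℝ) ≤ n + 1 := by linarith [n.cast_nonneg (α := ℝ)]
  have hcont : ContinuousOn (fun x => (F x / x) ^ 2) (Set.Icc 1 (n + 1)) :=
    (hFcont.div continuousOn_id fun x hx => (zero_lt_one.trans_le hx.1).ne').pow 2
  have hint := hcont.intervalIntegrable_of_Icc (μ := volume) hn1
  rw [← sum_Icc_intervalIntegral_eq hint]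
  refine sum_le_sum fun k hk => ?_
  have hk1 : (1 : ℝ) ≤ k := by exact_mod_cast (Finset.mem_Icc.1 hk).1
  have hsub := Icc_natCast_subset_Icc_one hk
  have hFk : 0 ≤ F k :=
    hF1 ▸ hmono (Set.left_mem_Icc.2 hn1) (hsub (Set.left_mem_Icc.2 (by linarith))) hk1
  rw [hpartial k hk]
  calc ∫ x in (k : ℝ)..(k + 1), (F x / x) ^ 2
      ≤ ((k + 1) - k) * (F (k + 1) / k) ^ 2 :=
        intervalIntegral_sq_div_le (by linarith) (by linarith) (hmono.mono hsub) hFk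
          (hint.of_mem_Icc_one hk)
    _ = (1 / (k : ℝ) * F (k + 1)) ^ 2 := by ring

end UnitIntervals

theorem two_mul_mul_cos_add_sin_nonneg {α T t : ℝ} (hα : 0 ≤ α) (hT : T ∈ Set.Ioo (π / 2) π)
    (hroot : tan T + 2 * α = 0) (ht : t ∈ Set.Icc 0 T) : 0 ≤ 2 * α * cos t + sin t := by
  obtain ⟨hT1, hT2⟩ := hT
  obtain ⟨ht0, htT⟩ := ht
  rcases le_or_gt t (π / 2) with hle | hgt
  · have := cos_nonneg_of_mem_Icc ⟨by linarith [pi_pos], hle⟩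
    have := sin_nonneg_of_nonneg_of_le_pi ht0 (by linarith)
    positivity
  · -- `tan` increases on `(π/2, π)`, where `2α cos t + sin t = cos t (2α + tan t)` and `cos t < 0`
    have hcos : cos t < 0 := cos_neg_of_pi_div_two_lt_of_lt hgt (by linarith [pi_pos])
    have htan : tan t ≤ tan T := by
      rw [← tan_periodic.sub_eq t, ← tan_periodic.sub_eq T]
      exact strictMonoOn_tan.monotoneOn ⟨by linarith, by linarith⟩ ⟨by linarith, by linarith⟩
        (by linarith)
    rw [show tan T = -(2 * α) by linarith, tan_eq_sin_div_cos, div_le_iff_of_neg hcos] at htan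
    linarith

theorem rpow_neg_one_half_eq_inv_sqrt {x : ℝ} (hx : 0 ≤ x) : x ^ (-(1 : ℝ) / 2) = (√x)⁻¹ := by
  rw [sqrt_eq_rpow, ← rpow_neg hx]
  ring_nf

noncomputable def hardyExtremal (α x : ℝ) : ℝ := 2 * √x * sin (α * log x)

noncomputable def hardyExtremalDeriv (α x : ℝ) : ℝ :=
  x ^ (-(1 : ℝ) / 2) * (2 * α * cos (α * log x) + sin (α * log x))

section HardyExtremal

variable (α : ℝ) {x : ℝ}

theorem hardyExtremal_one : hardyExtremal α 1 = 0 := by simp [hardyExtremal]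

theorem hasDerivAt_mul_log (hx : x ≠ 0) : HasDerivAt (fun y => α * log y) (α / x) x := by
  simpa [div_eq_mul_inv] using (hasDerivAt_log hx).const_mul α

theorem hasDerivAt_hardyExtremal (hx : 0 < x) :
    HasDerivAt (hardyExtremal α) (hardyExtremalDeriv α x) x := by
  have hsin := (hasDerivAt_mul_log α hx.ne').sin
  have hsqrt := (hasDerivAt_sqrt hx.ne').const_mul 2
  refine ((hsqrt.mul hsin).congr_deriv ?_)
  have hs : √x ≠ 0 := (sqrt_pos.mpr hx).ne'
  have hsq : √x * √x = x := mul_self_sqrt hx.le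
  rw [hardyExtremalDeriv, rpow_neg_one_half_eq_inv_sqrt hx.le]
  field_simp
  linear_combination 2 * α * cos (α * log x) * hsq

theorem continuousOn_hardyExtremalDeriv : ContinuousOn (hardyExtremalDeriv α) (Set.Ioi 0) := by
  unfold hardyExtremalDeriv
  fun_prop (disch := intro x hx; exact ne_of_gt hx)

theorem continuousOn_hardyExtremal : ContinuousOn (hardyExtremal α) (Set.Ioi 0) :=
  fun _ hx => (hasDerivAt_hardyExtremal α hx).continuousAt.continuousWithinAt

theorem hardyExtremal_mul_hardyExtremalDeriv (hx : 0 < x) :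
    hardyExtremal α x * hardyExtremalDeriv α x
      = 2 * sin (α * log x) * (2 * α * cos (α * log x) + sin (α * log x)) := by
  have hs : √x ≠ 0 := (sqrt_pos.mpr hx).ne'
  rw [hardyExtremal, hardyExtremalDeriv, rpow_neg_one_half_eq_inv_sqrt hx.le]
  field_simp

theorem hasDerivAt_hardyExtremal_mul_hardyExtremalDeriv (hx : 0 < x) :
    HasDerivAt (fun y => hardyExtremal α y * hardyExtremalDeriv α y)
      (hardyExtremalDeriv α x ^ 2 - (1 + 4 * α ^ 2) / 4 * (hardyExtremal α x / x) ^ 2) x := by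
  have hsimp : (fun y => hardyExtremal α y * hardyExtremalDeriv α y) =ᶠ[nhds x]
      fun y => 2 * sin (α * log y) * (2 * α * cos (α * log y) + sin (α * log y)) :=
    Filter.eventuallyEq_of_mem (Ioi_mem_nhds hx)
      fun y hy => hardyExtremal_mul_hardyExtremalDeriv α hy
  have hlog := hasDerivAt_mul_log α hx.ne'
  have hd := (hlog.sin.const_mul 2).fun_mul ((hlog.cos.const_mul (2 * α)).fun_add hlog.sin)
  refine (hd.congr_of_eventuallyEq hsimp).congr_deriv ?_
  have hs : √x ≠ 0 := (sqrt_pos.mpr hx).ne'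
  rw [hardyExtremal, hardyExtremalDeriv, rpow_neg_one_half_eq_inv_sqrt hx.le]
  simp only [mul_pow, div_pow, inv_pow, sq_sqrt hx.le]
  field_simp
  ring

theorem hardyExtremalDeriv_nonneg {N : ℝ} (hα : 0 ≤ α) (hT : α * log N ∈ Set.Ioo (π / 2) π)
    (hroot : tan (α * log N) + 2 * α = 0) (hx : x ∈ Set.Icc 1 N) : 0 ≤ hardyExtremalDeriv α x :=
  mul_nonneg (rpow_nonneg (zero_le_one.trans hx.1) _)
    (two_mul_mul_cos_add_sin_nonneg hα hT hroot
      ⟨mul_nonneg hα (log_nonneg hx.1),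
        mul_le_mul_of_nonneg_left (log_le_log (zero_lt_one.trans_le hx.1) hx.2) hα⟩)

theorem hardyExtremalDeriv_eq_zero {N : ℝ} (hT : α * log N ∈ Set.Ioo (π / 2) π)
    (hroot : tan (α * log N) + 2 * α = 0) : hardyExtremalDeriv α N = 0 := by
  have hcos : cos (α * log N) ≠ 0 :=
    (cos_neg_of_pi_div_two_lt_of_lt hT.1 (by linarith [hT.2, pi_pos])).ne
  rw [tan_eq_sin_div_cos] at hroot
  field_simp at hroot
  rw [hardyExtremalDeriv, mul_eq_zero]
  right
  linarith

theorem integral_hardyExtremalDeriv_sq {N : ℝ} (hN : 1 ≤ N) (hN0 : hardyExtremalDeriv α N = 0) :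
    ∫ x in (1 : ℝ)..N, hardyExtremalDeriv α x ^ 2
      = (1 + 4 * α ^ 2) / 4 * ∫ x in (1 : ℝ)..N, (hardyExtremal α x / x) ^ 2 := by
  have hpos : Set.uIcc 1 N ⊆ Set.Ioi 0 := fun x hx => by
    rw [Set.uIcc_of_le hN] at hx
    exact zero_lt_one.trans_le hx.1
  have hint1 : IntervalIntegrable (fun x => hardyExtremalDeriv α x ^ 2) volume 1 N :=
    (((continuousOn_hardyExtremalDeriv α).mono hpos).pow 2).intervalIntegrable
  have hcont2 : ContinuousOn (fun x => (hardyExtremal α x / x) ^ 2) (Set.uIcc 1 N) :=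
    (((continuousOn_hardyExtremal α).mono hpos).div continuousOn_id fun x hx => (hpos hx).ne').pow 2
  have hint2 := (hcont2.intervalIntegrable (μ := volume)).const_mul ((1 + 4 * α ^ 2) / 4)
  have hftc := intervalIntegral.integral_eq_sub_of_hasDerivAt
    (fun x hx => hasDerivAt_hardyExtremal_mul_hardyExtremalDeriv α (hpos hx)) (hint1.sub hint2)
  rw [intervalIntegral.integral_sub hint1 hint2, intervalIntegral.integral_const_mul, hN0,
    hardyExtremal_one, mul_zero, zero_mul, sub_zero] at hftc
  linarith

end HardyExtremal

theorem discrete_hardy_almost_extremal_general (n : ℕ) (α : ℝ)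
    (hα : α ∈ Set.Ioo (π / (2 * Real.log (n + 1))) (π / Real.log (n + 1)))
    (hroot : Real.tan (α * Real.log (n + 1)) + 2 * α = 0)
    (h : ℝ → ℝ)
    (hh : ∀ x ∈ Set.Icc (1 : ℝ) (n + 1),
      h x = x ^ (-(1 : ℝ) / 2) *
        (2 * α * Real.cos (α * Real.log x) + Real.sin (α * Real.log x)))
    (a : ℕ → ℝ) (ha : ∀ k, 1 ≤ k → k ≤ n → a k = ∫ x in (k : ℝ)..((k : ℝ) + 1), h x) :
    ∑ k ∈ Finset.Icc 1 n, ((1 / (k : ℝ)) * ∑ j ∈ Finset.Icc 1 k, a j) ^ 2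
      ≥ (4 / (1 + 4 * α ^ 2)) * ∑ k ∈ Finset.Icc 1 n, (a k) ^ 2 := by
  have hN : (1 : ℝ) ≤ n + 1 := le_add_of_nonneg_left n.cast_nonneg
  have hL : 0 < log (n + 1) := by
    refine (log_nonneg hN).lt_of_ne fun hL => ?_
    simp [← hL] at hα
  have hα0 : 0 < α := (by positivity : 0 < π / (2 * log (n + 1))).trans hα.1
  have hT : α * log (n + 1) ∈ Set.Ioo (π / 2) π :=
    ⟨by linarith [(div_lt_iff₀ (by positivity)).1 hα.1], (lt_div_iff₀ hL).1 hα.2⟩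
  have hcont : ContinuousOn (hardyExtremalDeriv α) (Set.Icc 1 (n + 1)) :=
    (continuousOn_hardyExtremalDeriv α).mono fun x hx => zero_lt_one.trans_le hx.1
  have ha' : ∀ k ∈ Icc 1 n, a k = ∫ x in (k : ℝ)..(k + 1), hardyExtremalDeriv α x := by
    intro k hk
    rw [ha k (Finset.mem_Icc.1 hk).1 (Finset.mem_Icc.1 hk).2]
    refine intervalIntegral.integral_congr fun x hx => hh x (Icc_natCast_subset_Icc_one hk ?_)
    rwa [Set.uIcc_of_le (by linarith)] at hx
  have hsq : ∑ k ∈ Icc 1 n, a k ^ 2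
      = ∑ k ∈ Icc 1 n, (∫ x in (k : ℝ)..(k + 1), hardyExtremalDeriv α x) ^ 2 :=
    sum_congr rfl fun k hk => by rw [ha' k hk]
  have hpartial : ∀ k ∈ Icc 1 n, ∑ j ∈ Icc 1 k, a j
      = ∑ j ∈ Icc 1 k, ∫ x in (j : ℝ)..(j + 1), hardyExtremalDeriv α x := fun k hk =>
    sum_congr rfl fun j hj => ha' j (by simp only [Finset.mem_Icc] at hj hk ⊢; omega)
  rw [ge_iff_le, hsq]
  calc 4 / (1 + 4 * α ^ 2) * ∑ k ∈ Icc 1 n, (∫ x in (k : ℝ)..(k + 1), hardyExtremalDeriv α x) ^ 2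
      ≤ 4 / (1 + 4 * α ^ 2) * ∫ x in (1 : ℝ)..(n + 1), hardyExtremalDeriv α x ^ 2 := by
        gcongr
        exact sum_sq_intervalIntegral_le (hcont.intervalIntegrable_of_Icc hN)
          ((hcont.pow 2).intervalIntegrable_of_Icc hN)
    _ = ∫ x in (1 : ℝ)..(n + 1), (hardyExtremal α x / x) ^ 2 := by
        rw [integral_hardyExtremalDeriv_sq α hN (hardyExtremalDeriv_eq_zero α hT hroot)]
        field_simp
    _ ≤ _ := integral_sq_div_le_sum_sq_partialAvg
        (fun x hx => hasDerivAt_hardyExtremal α (zero_lt_one.trans_le hx.1)) hcont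
        (fun x hx => hardyExtremalDeriv_nonneg α hα0.le hT hroot hx) (hardyExtremal_one α)
    _ = ∑ k ∈ Icc 1 n, (1 / (k : ℝ) * ∑ j ∈ Icc 1 k, a j) ^ 2 :=
        sum_congr rfl fun k hk => by rw [hpartial k hk]

theorem discrete_hardy_almost_extremal (n : ℕ) (hn : 1 ≤ n) (α : ℝ)
    (hα : α ∈ Set.Ioo (π / (2 * Real.log (n + 1))) (π / Real.log (n + 1)))
    (hroot : Real.tan (α * Real.log (n + 1)) + 2 * α = 0)
    (h : ℝ → ℝ)
    (hh : ∀ x ∈ Set.Icc (1 : ℝ) (n + 1),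
      h x = x ^ (-(1 : ℝ) / 2) *
        (2 * α * Real.cos (α * Real.log x) + Real.sin (α * Real.log x)))
    (a : ℕ → ℝ) (ha : ∀ k, 1 ≤ k → k ≤ n → a k = ∫ x in (k : ℝ)..((k : ℝ) + 1), h x) :
    ∑ k ∈ Finset.Icc 1 n, ((1 / (k : ℝ)) * ∑ j ∈ Finset.Icc 1 k, a j) ^ 2
      ≥ (4 / (1 + 4 * α ^ 2)) * ∑ k ∈ Finset.Icc 1 n, (a k) ^ 2 :=
  discrete_hardy_almost_extremal_general n α hα hroot h hh a ha
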